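/- arXiv:1401.7244 — 4 statements merged into one kernel-verified Lean document; each statement's English description precedes it below -/
import Mathlib

section
/- For a linear subspace S of M_n(ℂ), the k-reflexive cover satisfies Ref_k(S) = (S_⊥ ∩ F_k)_⊥, where S_⊥ = {C ∈ M_n : tr(CS) = 0 for all S ∈ S}, F_k is the set of matrices of rank at most k, and (S_⊥ ∩ F_k)_⊥ = {T ∈ M_n : tr(TC) = 0 for all C ∈ S_⊥ ∩ F_k}. -/
open Matrix

/-- The trace-pairing annihilator of a set of matrices. -/
def annih {α β : Type*} [Fintype α] [Fintype β] (S : Set (Matrix α β ℂ)) :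
    Set (Matrix β α ℂ) := {C | ∀ A ∈ S, (C * A).trace = 0}

/-- The algebraic `k`-reflexive cover `(S_⊥ ∩ F_k)_⊥`. -/
noncomputable def RefK {α β : Type*} [Fintype α] [Fintype β] (k : ℕ)
    (S : Set (Matrix α β ℂ)) : Set (Matrix α β ℂ) :=
  annih {C | C ∈ annih S ∧ C.rank ≤ k}

/-- The `k`-reflexivity defect. -/
noncomputable def rdK {α β : Type*} [Fintype α] [Fintype β] (k : ℕ)
    (S : Set (Matrix α β ℂ)) : ℕ :=
  Module.finrank ℂ (Submodule.span ℂ (RefK k S)) -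
    Module.finrank ℂ (Submodule.span ℂ S)

/-- The `m × m` Jordan block with eigenvalue `lam`. -/
def JB (m : ℕ) (lam : ℂ) : Matrix (Fin m) (Fin m) ℂ :=
  Matrix.of fun i j => if (j : ℕ) = (i : ℕ) + 1 then 1 else if j = i then lam else 0

/-- Upper triangular Toeplitz matrices: entry `(i,j)` depends only on `j - i`,
and vanishes when `j < i`. -/
def UTToeplitz (m : ℕ) : Set (Matrix (Fin m) (Fin m) ℂ) :=
  {C | (∀ i j : Fin m, (j : ℕ) < (i : ℕ) → C i j = 0) ∧
    ∀ i j i' j' : Fin m, (i : ℕ) + (j' : ℕ) = (i' : ℕ) + (j : ℕ) → C i j = C i' j'}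

/-!
A matrix has rank at most `k` iff it factors as `X * Y` with `X : n × k`, and
`tr (T * (X * Y)) = tr (Y * (T * X))`. So `T ∈ (S_⊥ ∩ F_k)_⊥` says that for every `X`, the matrix
`T * X` is annihilated by the annihilator of the subspace `S * X`; by trace duality this means
`T * X ∈ S * X`, i.e. `T` is interpolated exactly on the columns of `X` by some element of `S`.
The metric condition says that `T * X` lies in the closure of `S * X`, and a finite-dimensional
subspace is closed.
-/

namespace Matrix

variable {m n ι K : Type*} [Fintype n] [Fintype ι]

theorem exists_eq_mul_of_rank_le [Field K] {C : Matrix m n K}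
    (h : C.rank ≤ Fintype.card ι) : ∃ (X : Matrix m ι K) (Y : Matrix ι n K), C = X * Y := by
  classical
  -- Factor `C` through its range `W`, which embeds into `ι → K` with a left inverse.
  set W := LinearMap.range C.mulVecLin
  obtain ⟨e, he⟩ : ∃ e : W →ₗ[K] ι → K, Function.Injective e :=
    finrank_le_iff_exists_linearMap.1 (by rwa [Module.finrank_fintype_fun_eq_card])
  obtain ⟨p, hp⟩ := e.exists_leftInverse_of_injective (LinearMap.ker_eq_bot.2 he)
  refine ⟨LinearMap.toMatrix' (W.subtype ∘ₗ p),
    LinearMap.toMatrix' (e ∘ₗ C.mulVecLin.rangeRestrict), ?_⟩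
  rw [← LinearMap.toMatrix'_comp, LinearMap.comp_assoc, ← LinearMap.comp_assoc _ e p, hp,
    LinearMap.id_comp, LinearMap.subtype_comp_codRestrict, ← Matrix.toLin'_apply',
    LinearMap.toMatrix'_toLin']

theorem rank_le_card_iff_exists_eq_mul [Field K] {C : Matrix m n K} :
    C.rank ≤ Fintype.card ι ↔ ∃ (X : Matrix m ι K) (Y : Matrix ι n K), C = X * Y := by
  refine ⟨exists_eq_mul_of_rank_le, ?_⟩
  rintro ⟨X, Y, rfl⟩
  exact (rank_mul_le_left X Y).trans (rank_le_card_width X)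

theorem exists_eq_trace_mul [Fintype m] {R : Type*} [CommSemiring R]
    (f : Module.Dual R (Matrix m n R)) :
    ∃ Y : Matrix n m R, ∀ M, f M = trace (Y * M) := by
  classical
  refine ⟨of fun j i => f (single i j 1), fun M => ?_⟩
  have hsingle (i : m) (j : n) : f (single i j (M i j)) = M i j * f (single i j 1) := by
    rw [← smul_eq_mul, ← map_smul, smul_single, smul_eq_mul, mul_one]
  conv_lhs => rw [matrix_eq_sum_single M]
  simp only [map_sum, hsingle, trace, diag, mul_apply, of_apply, mul_comm]
  exact Finset.sum_comm

end Matrix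

theorem Submodule.mem_iff_forall_exists_norm_sub_lt {𝕜 E : Type*} [NontriviallyNormedField 𝕜]
    [CompleteSpace 𝕜] [NormedAddCommGroup E] [NormedSpace 𝕜 E] (V : Submodule 𝕜 E)
    [FiniteDimensional 𝕜 V] (v : E) : v ∈ V ↔ ∀ ε > 0, ∃ w ∈ V, ‖v - w‖ < ε := by
  rw [← SetLike.mem_coe, ← V.closed_of_finiteDimensional.closure_eq, Metric.mem_closure_iff]
  simp only [dist_eq_norm, SetLike.mem_coe]

section annih

variable {α β ι : Type*} [Fintype α] [Fintype β] [Fintype ι]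

theorem annih_annih (V : Submodule ℂ (Matrix α β ℂ)) :
    annih (annih (V : Set (Matrix α β ℂ))) = V := by
  ext M
  refine ⟨fun hM => ?_, fun hM C hC => trace_mul_comm M C ▸ hC M hM⟩
  rw [SetLike.mem_coe, ← Subspace.forall_mem_dualAnnihilator_apply_eq_zero_iff]
  intro φ hφ
  obtain ⟨Y, hY⟩ := Matrix.exists_eq_trace_mul φ
  rw [Submodule.mem_dualAnnihilator] at hφ
  rw [hY, trace_mul_comm]
  exact hM Y fun A hA => hY A ▸ hφ A hA

theorem mem_annih_map_mulRightLinearMap (S : Submodule ℂ (Matrix α β ℂ))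
    (X : Matrix β ι ℂ) (Y : Matrix ι α ℂ) :
    Y ∈ annih (S.map (mulRightLinearMap α ℂ X) : Set (Matrix α ι ℂ)) ↔
      X * Y ∈ annih (S : Set (Matrix α β ℂ)) := by
  simp only [annih, Submodule.map_coe, Set.mem_ofPred_eq, Set.forall_mem_image,
    mulRightLinearMap_apply, SetLike.mem_coe]
  refine forall₂_congr fun A _ => ?_
  rw [← Matrix.mul_assoc, trace_mul_cycle]

theorem mul_mem_map_mulRightLinearMap_iff_forall_trace (S : Submodule ℂ (Matrix α β ℂ))
    (T : Matrix α β ℂ) (X : Matrix β ι ℂ) : T * X ∈ S.map (mulRightLinearMap α ℂ X) ↔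
      ∀ Y : Matrix ι α ℂ, X * Y ∈ annih (S : Set (Matrix α β ℂ)) → trace (T * (X * Y)) = 0 := by
  rw [← SetLike.mem_coe, ← annih_annih]
  refine forall_congr' fun Y => ?_
  rw [mem_annih_map_mulRightLinearMap, Matrix.mul_assoc]

theorem mem_RefK_iff (k : ℕ) (S : Set (Matrix α β ℂ)) (T : Matrix α β ℂ) :
    T ∈ RefK k S ↔ ∀ (X : Matrix β (Fin k) ℂ) (Y : Matrix (Fin k) α ℂ),
      X * Y ∈ annih S → trace (T * (X * Y)) = 0 := by
  have hrank (C : Matrix β α ℂ) : C.rank ≤ k ↔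
      ∃ (X : Matrix β (Fin k) ℂ) (Y : Matrix (Fin k) α ℂ), C = X * Y := by
    simpa using Matrix.rank_le_card_iff_exists_eq_mul (ι := Fin k)
  refine ⟨fun h X Y hXY => h _ ⟨hXY, (hrank _).2 ⟨X, Y, rfl⟩⟩, ?_⟩
  rintro h C ⟨hC, hCk⟩
  obtain ⟨X, Y, rfl⟩ := (hrank C).1 hCk
  exact h X Y hC

end annih

section approx

-- Entrywise sup norm: `‖M‖ < ε` iff every column of `M` has sup norm `< ε`.
attribute [local instance] Matrix.normedAddCommGroup Matrix.normedSpace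

variable {m n ι : Type*} [Fintype m] [Fintype n] [Fintype ι]

theorem mul_mem_map_mulRightLinearMap_iff_forall_norm_lt (S : Submodule ℂ (Matrix m n ℂ))
    (T : Matrix m n ℂ) (X : Matrix n ι ℂ) : T * X ∈ S.map (mulRightLinearMap m ℂ X) ↔
      ∀ ε > (0 : ℝ), ∃ S₀ ∈ S, ∀ i, ‖T *ᵥ Xᵀ i - S₀ *ᵥ Xᵀ i‖ < ε := by
  rw [Submodule.mem_iff_forall_exists_norm_sub_lt]
  simp only [Submodule.mem_map, mulRightLinearMap_apply, exists_exists_and_eq_and]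
  refine forall₂_congr fun ε hε => exists_congr fun S₀ => and_congr_right fun _ => ?_
  rw [Matrix.norm_lt_iff hε, forall_comm]
  exact forall_congr' fun i => (pi_norm_lt_iff hε).symm

end approx

theorem refk_eq_annih_inter_rank_general (n k : ℕ)
    (S : Submodule ℂ (Matrix (Fin n) (Fin n) ℂ)) :
    {T : Matrix (Fin n) (Fin n) ℂ | ∀ ε > (0 : ℝ), ∀ x : Fin k → EuclideanSpace ℂ (Fin n),
        ∃ S₀ ∈ (S : Set (Matrix (Fin n) (Fin n) ℂ)), ∀ i : Fin k,
          ‖T.mulVec (x i) - S₀.mulVec (x i)‖ < ε} =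
      RefK k (S : Set (Matrix (Fin n) (Fin n) ℂ)) := by
  ext T
  simp_rw [Set.mem_ofPred_eq, mem_RefK_iff, ← mul_mem_map_mulRightLinearMap_iff_forall_trace,
    mul_mem_map_mulRightLinearMap_iff_forall_norm_lt, SetLike.mem_coe]
  exact ⟨fun h X ε hε => h ε hε fun i => WithLp.toLp 2 (Xᵀ i),
    fun h ε hε x => h (of fun i => (x i).ofLp)ᵀ ε hε⟩

/-- for a linear subspace `S` of `M_n(ℂ)`, the metric `k`-reflexive
cover equals `(S_⊥ ∩ F_k)_⊥`. -/
theorem refk_eq_annih_inter_rank (n k : ℕ) (hn : 0 < n) (hk : 0 < k)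
    (S : Submodule ℂ (Matrix (Fin n) (Fin n) ℂ)) :
    {T : Matrix (Fin n) (Fin n) ℂ | ∀ ε > (0 : ℝ), ∀ x : Fin k → EuclideanSpace ℂ (Fin n),
        ∃ S₀ ∈ (S : Set (Matrix (Fin n) (Fin n) ℂ)), ∀ i : Fin k,
          ‖T.mulVec (x i) - S₀.mulVec (x i)‖ < ε} =
      RefK k (S : Set (Matrix (Fin n) (Fin n) ℂ)) :=
  refk_eq_annih_inter_rank_general n k S
end

section
/- If A, B ∈ M_n(ℂ) are invertible, then for any linear subspace S of M_n(ℂ), the k-reflexivity defect satisfies rd_k(ASB) = rd_k(S), where ASB = {ASB : S ∈ S}. -/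
open Matrix

/-!
`T ↦ A T B` is a linear automorphism of the matrix space, so it preserves the dimension of spans.
Under the trace pairing its transpose is `C ↦ B C A`, which also preserves rank; hence the
rank-`≤ k` part of the annihilator of `A S B` is `B⁻¹ (S_⊥ ∩ F_k) A⁻¹`, and annihilating once more
gives `Ref_k(A S B) = A Ref_k(S) B`.
-/

section UnitsMulMul

variable {R α β : Type*} [Fintype α] [Fintype β] [DecidableEq α] [DecidableEq β]

def mulMulLinearEquiv [CommSemiring R] (u : (Matrix α α R)ˣ) (v : (Matrix β β R)ˣ) :
    Matrix α β R ≃ₗ[R] Matrix α β R where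
  toFun T := (u : Matrix α α R) * T * (v : Matrix β β R)
  invFun T := (↑u⁻¹ : Matrix α α R) * T * (↑v⁻¹ : Matrix β β R)
  map_add' T T' := by simp only [Matrix.mul_add, Matrix.add_mul]
  map_smul' c T := by simp only [Matrix.mul_smul, Matrix.smul_mul, RingHom.id_apply]
  left_inv T := by
    simp only [Matrix.mul_assoc, Units.mul_inv, Matrix.mul_one,
      ← Matrix.mul_assoc (↑u⁻¹ : Matrix α α R), Units.inv_mul, Matrix.one_mul]
  right_inv T := by
    simp only [Matrix.mul_assoc, Units.inv_mul, Matrix.mul_one,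
      ← Matrix.mul_assoc (u : Matrix α α R), Units.mul_inv, Matrix.one_mul]

lemma rank_units_mul_mul_units [CommRing R] (u : (Matrix α α R)ˣ) (v : (Matrix β β R)ˣ)
    (T : Matrix α β R) : ((u : Matrix α α R) * T * (v : Matrix β β R)).rank = T.rank := by
  rw [rank_mul_eq_left_of_isUnit_det _ _ ((isUnit_iff_isUnit_det _).mp v.isUnit),
    rank_mul_eq_right_of_isUnit_det _ _ ((isUnit_iff_isUnit_det _).mp u.isUnit)]

lemma finrank_span_image_units_mul_mul_units [CommRing R] (u : (Matrix α α R)ˣ)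
    (v : (Matrix β β R)ˣ) (X : Set (Matrix α β R)) :
    Module.finrank R
        (Submodule.span R ((fun T => (u : Matrix α α R) * T * (v : Matrix β β R)) '' X)) =
      Module.finrank R (Submodule.span R X) := by
  rw [show (fun T => (u : Matrix α α R) * T * (v : Matrix β β R)) = mulMulLinearEquiv u v
    from rfl, ← LinearEquiv.coe_toLinearMap, Submodule.span_image]
  exact LinearEquiv.finrank_map_eq _ _

end UnitsMulMul

section Annihilator

variable {α β : Type*} [Fintype α] [Fintype β]

lemma annih_image_mul_mul (A : Matrix α α ℂ) (B : Matrix β β ℂ) (S : Set (Matrix α β ℂ)) :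
    annih ((fun T => A * T * B) '' S) = (fun C => B * C * A) ⁻¹' annih S := by
  have trace_eq (C : Matrix β α ℂ) (T : Matrix α β ℂ) :
      (C * (A * T * B)).trace = (B * C * A * T).trace := by
    rw [← Matrix.mul_assoc, trace_mul_comm, ← Matrix.mul_assoc, ← Matrix.mul_assoc]
  ext C
  simp only [annih, Set.mem_ofPred_eq, Set.mem_preimage, Set.forall_mem_image, trace_eq]

variable [DecidableEq α] [DecidableEq β]

lemma annih_image_units_mul_mul_units (u : (Matrix α α ℂ)ˣ) (v : (Matrix β β ℂ)ˣ)
    (S : Set (Matrix α β ℂ)) :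
    annih ((fun T => (u : Matrix α α ℂ) * T * (v : Matrix β β ℂ)) '' S) =
      (fun C => (↑v⁻¹ : Matrix β β ℂ) * C * (↑u⁻¹ : Matrix α α ℂ)) '' annih S := by
  rw [annih_image_mul_mul]
  exact ((mulMulLinearEquiv v u).image_symm_eq_preimage _).symm

lemma RefK_image_units_mul_mul_units (k : ℕ) (u : (Matrix α α ℂ)ˣ) (v : (Matrix β β ℂ)ˣ)
    (S : Set (Matrix α β ℂ)) :
    RefK k ((fun T => (u : Matrix α α ℂ) * T * (v : Matrix β β ℂ)) '' S) =
      (fun T => (u : Matrix α α ℂ) * T * (v : Matrix β β ℂ)) '' RefK k S := by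
  have rank_le_image (X : Set (Matrix β α ℂ)) :
      {C | C ∈ (fun C => (↑v⁻¹ : Matrix β β ℂ) * C * (↑u⁻¹ : Matrix α α ℂ)) '' X ∧
          C.rank ≤ k} =
        (fun C => (↑v⁻¹ : Matrix β β ℂ) * C * (↑u⁻¹ : Matrix α α ℂ)) ''
          {C | C ∈ X ∧ C.rank ≤ k} := by
    ext C
    constructor
    · rintro ⟨⟨D, hD, rfl⟩, hrank⟩
      exact ⟨D, ⟨hD, (rank_units_mul_mul_units _ _ D).symm.trans_le hrank⟩, rfl⟩
    · rintro ⟨D, ⟨hD, hrank⟩, rfl⟩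
      exact ⟨⟨D, hD, rfl⟩, (rank_units_mul_mul_units _ _ D).trans_le hrank⟩
  rw [RefK, annih_image_units_mul_mul_units, rank_le_image, annih_image_units_mul_mul_units,
    inv_inv, inv_inv, RefK]

end Annihilator

theorem rdk_mul_invariant_general (n k : ℕ)
    (A B : Matrix (Fin n) (Fin n) ℂ) (hA : IsUnit A) (hB : IsUnit B)
    (S : Submodule ℂ (Matrix (Fin n) (Fin n) ℂ)) :
    rdK k ((fun T => A * T * B) '' (S : Set (Matrix (Fin n) (Fin n) ℂ))) =
      rdK k (S : Set (Matrix (Fin n) (Fin n) ℂ)) := by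
  obtain ⟨u, rfl⟩ := hA
  obtain ⟨v, rfl⟩ := hB
  rw [rdK, RefK_image_units_mul_mul_units, finrank_span_image_units_mul_mul_units,
    finrank_span_image_units_mul_mul_units, rdK]

/-- for invertible `A, B`, the `k`-reflexivity defect satisfies
`rd_k(A S B) = rd_k(S)`. -/
theorem rdk_mul_invariant (n k : ℕ) (hn : 0 < n) (hk : 0 < k)
    (A B : Matrix (Fin n) (Fin n) ℂ) (hA : IsUnit A) (hB : IsUnit B)
    (S : Submodule ℂ (Matrix (Fin n) (Fin n) ℂ)) :
    rdK k ((fun T => A * T * B) '' (S : Set (Matrix (Fin n) (Fin n) ℂ))) =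
      rdK k (S : Set (Matrix (Fin n) (Fin n) ℂ)) :=
  rdk_mul_invariant_general n k A B hA hB S
end

section
/- Let S be a subspace of M_{m₁+m₂}(ℂ) of block form S = [[S₁₁, S₁₂],[S₂₁, S₂₂]], where each S_ij is a subspace of the corresponding block of matrices. Then Ref_k(S) = [[Ref_k(S₁₁), Ref_k(S₁₂)],[Ref_k(S₂₁), Ref_k(S₂₂)]] and rd_k(S) = rd_k(S₁₁) + rd_k(S₁₂) + rd_k(S₂₁) + rd_k(S₂₂). -/
open Matrix

section Aux

set_option linter.unusedSectionVars false

variable {α β γ δ : Type*} [Fintype α] [Fintype β] [Fintype γ] [Fintype δ]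

/-- `annih` as a submodule. -/
noncomputable def annihSub (S : Set (Matrix α β ℂ)) : Submodule ℂ (Matrix β α ℂ) where
  carrier := annih S
  add_mem' := by
    intro a b ha hb A hA
    rw [Matrix.add_mul, trace_add, ha A hA, hb A hA, add_zero]
  zero_mem' := by intro A hA; simp
  smul_mem' := by
    intro c a ha A hA
    rw [Matrix.smul_mul, trace_smul, ha A hA, smul_zero]

lemma annihSub_coe (S : Set (Matrix α β ℂ)) :
    (annihSub S : Set (Matrix β α ℂ)) = annih S := rfl

lemma span_annih (T : Set (Matrix α β ℂ)) :
    Submodule.span ℂ (annih T) = annihSub T := by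
  rw [← annihSub_coe, Submodule.span_eq]

lemma rank_submatrix_le_gen [DecidableEq γ] [DecidableEq δ]
    (A : Matrix γ δ ℂ) (f : α → γ) (g : β → δ) :
    (A.submatrix f g).rank ≤ A.rank := by
  have h : A.submatrix f g =
      (1 : Matrix γ γ ℂ).submatrix f id * A * (1 : Matrix δ δ ℂ).submatrix id g := by
    ext i j
    simp [mul_apply, one_apply, Finset.sum_ite_eq, Finset.sum_ite_eq',
      ite_mul, mul_ite, mul_one, mul_zero, one_mul, zero_mul]
  rw [h]
  exact (Matrix.rank_mul_le_left _ _).trans (Matrix.rank_mul_le_right _ _)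

variable [DecidableEq α] [DecidableEq β] [DecidableEq γ] [DecidableEq δ]

lemma embed_eq₁₁ (C : Matrix α β ℂ) :
    (fromBlocks C 0 0 0 : Matrix (α ⊕ γ) (β ⊕ δ) ℂ) =
      (1 : Matrix (α ⊕ γ) (α ⊕ γ) ℂ).submatrix id Sum.inl * C *
        (1 : Matrix (β ⊕ δ) (β ⊕ δ) ℂ).submatrix Sum.inl id := by
  ext i j
  rcases i with i | i <;> rcases j with j | j <;>
    simp [mul_apply, one_apply, fromBlocks, Finset.sum_ite_eq, Finset.sum_ite_eq',
      ite_mul, mul_ite, mul_one, mul_zero, one_mul, zero_mul]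

lemma rank_embed₁₁ (C : Matrix α β ℂ) :
    (fromBlocks C 0 0 0 : Matrix (α ⊕ γ) (β ⊕ δ) ℂ).rank ≤ C.rank := by
  rw [embed_eq₁₁]
  exact (Matrix.rank_mul_le_left _ _).trans (Matrix.rank_mul_le_right _ _)

lemma embed_eq₁₂ (C : Matrix α δ ℂ) :
    (fromBlocks 0 C 0 0 : Matrix (α ⊕ γ) (β ⊕ δ) ℂ) =
      (1 : Matrix (α ⊕ γ) (α ⊕ γ) ℂ).submatrix id Sum.inl * C *
        (1 : Matrix (β ⊕ δ) (β ⊕ δ) ℂ).submatrix Sum.inr id := by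
  ext i j
  rcases i with i | i <;> rcases j with j | j <;>
    simp [mul_apply, one_apply, fromBlocks, Finset.sum_ite_eq, Finset.sum_ite_eq',
      ite_mul, mul_ite, mul_one, mul_zero, one_mul, zero_mul]

lemma embed_eq₂₁ (C : Matrix γ β ℂ) :
    (fromBlocks 0 0 C 0 : Matrix (α ⊕ γ) (β ⊕ δ) ℂ) =
      (1 : Matrix (α ⊕ γ) (α ⊕ γ) ℂ).submatrix id Sum.inr * C *
        (1 : Matrix (β ⊕ δ) (β ⊕ δ) ℂ).submatrix Sum.inl id := by
  ext i j
  rcases i with i | i <;> rcases j with j | j <;>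
    simp [mul_apply, one_apply, fromBlocks, Finset.sum_ite_eq, Finset.sum_ite_eq',
      ite_mul, mul_ite, mul_one, mul_zero, one_mul, zero_mul]

lemma embed_eq₂₂ (C : Matrix γ δ ℂ) :
    (fromBlocks 0 0 0 C : Matrix (α ⊕ γ) (β ⊕ δ) ℂ) =
      (1 : Matrix (α ⊕ γ) (α ⊕ γ) ℂ).submatrix id Sum.inr * C *
        (1 : Matrix (β ⊕ δ) (β ⊕ δ) ℂ).submatrix Sum.inr id := by
  ext i j
  rcases i with i | i <;> rcases j with j | j <;>
    simp [mul_apply, one_apply, fromBlocks, Finset.sum_ite_eq, Finset.sum_ite_eq',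
      ite_mul, mul_ite, mul_one, mul_zero, one_mul, zero_mul]

lemma rank_embed₁₂ (C : Matrix α δ ℂ) :
    (fromBlocks 0 C 0 0 : Matrix (α ⊕ γ) (β ⊕ δ) ℂ).rank ≤ C.rank := by
  rw [embed_eq₁₂]
  exact (Matrix.rank_mul_le_left _ _).trans (Matrix.rank_mul_le_right _ _)

lemma rank_embed₂₁ (C : Matrix γ β ℂ) :
    (fromBlocks 0 0 C 0 : Matrix (α ⊕ γ) (β ⊕ δ) ℂ).rank ≤ C.rank := by
  rw [embed_eq₂₁]
  exact (Matrix.rank_mul_le_left _ _).trans (Matrix.rank_mul_le_right _ _)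

lemma rank_embed₂₂ (C : Matrix γ δ ℂ) :
    (fromBlocks 0 0 0 C : Matrix (α ⊕ γ) (β ⊕ δ) ℂ).rank ≤ C.rank := by
  rw [embed_eq₂₂]
  exact (Matrix.rank_mul_le_left _ _).trans (Matrix.rank_mul_le_right _ _)

lemma trace_fromBlocks' (A : Matrix α α ℂ) (B : Matrix α γ ℂ) (C : Matrix γ α ℂ)
    (D : Matrix γ γ ℂ) :
    (fromBlocks A B C D).trace = A.trace + D.trace := by
  simp [Matrix.trace, Matrix.diag, Fintype.sum_sum_type, fromBlocks]

lemma trace_mul_blocks (C M : Matrix (α ⊕ γ) (α ⊕ γ) ℂ) :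
    (C * M).trace = (C.toBlocks₁₁ * M.toBlocks₁₁).trace + (C.toBlocks₁₂ * M.toBlocks₂₁).trace
      + (C.toBlocks₂₁ * M.toBlocks₁₂).trace + (C.toBlocks₂₂ * M.toBlocks₂₂).trace := by
  conv_lhs => rw [← fromBlocks_toBlocks C, ← fromBlocks_toBlocks M]
  rw [fromBlocks_multiply, trace_fromBlocks', trace_add, trace_add]
  ring

/-- The linear equivalence between block matrices and quadruples of blocks. -/
noncomputable def blockEquiv : Matrix (α ⊕ γ) (α ⊕ γ) ℂ ≃ₗ[ℂ]
    (Matrix α α ℂ × Matrix α γ ℂ × Matrix γ α ℂ × Matrix γ γ ℂ) where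
  toFun M := (M.toBlocks₁₁, M.toBlocks₁₂, M.toBlocks₂₁, M.toBlocks₂₂)
  invFun x := fromBlocks x.1 x.2.1 x.2.2.1 x.2.2.2
  map_add' _ _ := rfl
  map_smul' _ _ := rfl
  left_inv M := fromBlocks_toBlocks M
  right_inv x := by
    simp only [toBlocks_fromBlocks₁₁, toBlocks_fromBlocks₁₂, toBlocks_fromBlocks₂₁,
      toBlocks_fromBlocks₂₂]

/-- The block submodule. -/
noncomputable def blockSub (p : Submodule ℂ (Matrix α α ℂ)) (q : Submodule ℂ (Matrix α γ ℂ))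
    (r : Submodule ℂ (Matrix γ α ℂ)) (s : Submodule ℂ (Matrix γ γ ℂ)) :
    Submodule ℂ (Matrix (α ⊕ γ) (α ⊕ γ) ℂ) :=
  (p.prod (q.prod (r.prod s))).map (blockEquiv (α := α) (γ := γ)).symm.toLinearMap

lemma blockSub_coe (p : Submodule ℂ (Matrix α α ℂ)) (q : Submodule ℂ (Matrix α γ ℂ))
    (r : Submodule ℂ (Matrix γ α ℂ)) (s : Submodule ℂ (Matrix γ γ ℂ)) :
    (blockSub p q r s : Set (Matrix (α ⊕ γ) (α ⊕ γ) ℂ)) =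
      {M | M.toBlocks₁₁ ∈ p ∧ M.toBlocks₁₂ ∈ q ∧ M.toBlocks₂₁ ∈ r ∧ M.toBlocks₂₂ ∈ s} := by
  ext M
  rw [SetLike.mem_coe, blockSub, Submodule.mem_map_equiv]
  simp only [LinearEquiv.symm_symm, Submodule.mem_prod]
  rfl

/-- The submodule product equivalence. -/
noncomputable def prodSubEquiv {V W : Type*} [AddCommGroup V] [AddCommGroup W] [Module ℂ V]
    [Module ℂ W] (p : Submodule ℂ V) (q : Submodule ℂ W) : (p.prod q) ≃ₗ[ℂ] p × q where
  toFun x := (⟨x.1.1, x.2.1⟩, ⟨x.1.2, x.2.2⟩)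
  invFun y := ⟨(y.1.1, y.2.1), ⟨y.1.2, y.2.2⟩⟩
  map_add' _ _ := rfl
  map_smul' _ _ := rfl
  left_inv _ := rfl
  right_inv _ := rfl

lemma finrank_prodSub {V W : Type*} [AddCommGroup V] [AddCommGroup W] [Module ℂ V]
    [Module ℂ W] [FiniteDimensional ℂ V] [FiniteDimensional ℂ W]
    (p : Submodule ℂ V) (q : Submodule ℂ W) :
    Module.finrank ℂ (p.prod q) = Module.finrank ℂ p + Module.finrank ℂ q := by
  rw [(prodSubEquiv p q).finrank_eq, Module.finrank_prod]

lemma finrank_blockSub (p : Submodule ℂ (Matrix α α ℂ)) (q : Submodule ℂ (Matrix α γ ℂ))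
    (r : Submodule ℂ (Matrix γ α ℂ)) (s : Submodule ℂ (Matrix γ γ ℂ)) :
    Module.finrank ℂ (blockSub p q r s) = Module.finrank ℂ p + Module.finrank ℂ q
      + Module.finrank ℂ r + Module.finrank ℂ s := by
  rw [blockSub, LinearEquiv.finrank_map_eq, finrank_prodSub, finrank_prodSub, finrank_prodSub]
  ring

end Aux

lemma zero_mem_annih {α β : Type*} [Fintype α] [Fintype β] (X : Set (Matrix α β ℂ)) :
    (0 : Matrix β α ℂ) ∈ annih X := fun A _ => by simp

lemma subset_RefK {α β : Type*} [Fintype α] [Fintype β] (k : ℕ) (S : Set (Matrix α β ℂ)) :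
    S ⊆ RefK k S := by
  intro A hA C hC
  rw [trace_mul_comm]
  exact hC.1 A hA

/-- the `k`-reflexive cover and `k`-reflexivity defect of a block
subspace are computed blockwise. -/
theorem refk_blocks (m₁ m₂ k : ℕ) (h₁ : 0 < m₁) (h₂ : 0 < m₂) (hk : 0 < k)
    (S₁₁ : Submodule ℂ (Matrix (Fin m₁) (Fin m₁) ℂ))
    (S₁₂ : Submodule ℂ (Matrix (Fin m₁) (Fin m₂) ℂ))
    (S₂₁ : Submodule ℂ (Matrix (Fin m₂) (Fin m₁) ℂ))
    (S₂₂ : Submodule ℂ (Matrix (Fin m₂) (Fin m₂) ℂ))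
    (S : Set (Matrix (Fin m₁ ⊕ Fin m₂) (Fin m₁ ⊕ Fin m₂) ℂ))
    (hS : S = {M | M.toBlocks₁₁ ∈ S₁₁ ∧ M.toBlocks₁₂ ∈ S₁₂ ∧
      M.toBlocks₂₁ ∈ S₂₁ ∧ M.toBlocks₂₂ ∈ S₂₂}) :
    RefK k S = {M | M.toBlocks₁₁ ∈ RefK k (S₁₁ : Set (Matrix (Fin m₁) (Fin m₁) ℂ)) ∧
        M.toBlocks₁₂ ∈ RefK k (S₁₂ : Set (Matrix (Fin m₁) (Fin m₂) ℂ)) ∧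
        M.toBlocks₂₁ ∈ RefK k (S₂₁ : Set (Matrix (Fin m₂) (Fin m₁) ℂ)) ∧
        M.toBlocks₂₂ ∈ RefK k (S₂₂ : Set (Matrix (Fin m₂) (Fin m₂) ℂ))} ∧
      rdK k S = rdK k (S₁₁ : Set (Matrix (Fin m₁) (Fin m₁) ℂ)) +
        rdK k (S₁₂ : Set (Matrix (Fin m₁) (Fin m₂) ℂ)) +
        rdK k (S₂₁ : Set (Matrix (Fin m₂) (Fin m₁) ℂ)) +
        rdK k (S₂₂ : Set (Matrix (Fin m₂) (Fin m₂) ℂ)) := by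
  -- characterization of the annihilator of `S`
  have hannih : ∀ C : Matrix (Fin m₁ ⊕ Fin m₂) (Fin m₁ ⊕ Fin m₂) ℂ,
      C ∈ annih S ↔ C.toBlocks₁₁ ∈ annih (S₁₁ : Set _) ∧ C.toBlocks₂₁ ∈ annih (S₁₂ : Set _)
        ∧ C.toBlocks₁₂ ∈ annih (S₂₁ : Set _) ∧ C.toBlocks₂₂ ∈ annih (S₂₂ : Set _) := by
    intro C
    constructor
    · intro hC
      refine ⟨?_, ?_, ?_, ?_⟩
      · intro A hA
        have hmem : (fromBlocks A 0 0 0 : Matrix _ _ ℂ) ∈ S := by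
          rw [hS]
          exact ⟨by simpa using hA, by simp, by simp, by simp⟩
        simpa [trace_mul_blocks] using hC _ hmem
      · intro A hA
        have hmem : (fromBlocks 0 A 0 0 : Matrix _ _ ℂ) ∈ S := by
          rw [hS]
          exact ⟨by simp, by simpa using hA, by simp, by simp⟩
        simpa [trace_mul_blocks] using hC _ hmem
      · intro A hA
        have hmem : (fromBlocks 0 0 A 0 : Matrix _ _ ℂ) ∈ S := by
          rw [hS]
          exact ⟨by simp, by simp, by simpa using hA, by simp⟩
        simpa [trace_mul_blocks] using hC _ hmem
      · intro A hA
        have hmem : (fromBlocks 0 0 0 A : Matrix _ _ ℂ) ∈ S := by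
          rw [hS]
          exact ⟨by simp, by simp, by simp, by simpa using hA⟩
        simpa [trace_mul_blocks] using hC _ hmem
    · rintro ⟨h11, h21, h12, h22⟩ A hA
      rw [hS] at hA
      rw [trace_mul_blocks, h11 _ hA.1, h21 _ hA.2.1, h12 _ hA.2.2.1, h22 _ hA.2.2.2]
      ring
  -- the reflexive-cover set equality
  have hRef : RefK k S = {M | M.toBlocks₁₁ ∈ RefK k (S₁₁ : Set (Matrix (Fin m₁) (Fin m₁) ℂ)) ∧
      M.toBlocks₁₂ ∈ RefK k (S₁₂ : Set (Matrix (Fin m₁) (Fin m₂) ℂ)) ∧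
      M.toBlocks₂₁ ∈ RefK k (S₂₁ : Set (Matrix (Fin m₂) (Fin m₁) ℂ)) ∧
      M.toBlocks₂₂ ∈ RefK k (S₂₂ : Set (Matrix (Fin m₂) (Fin m₂) ℂ))} := by
    ext M
    constructor
    · intro hM
      refine ⟨?_, ?_, ?_, ?_⟩
      · rintro C ⟨hC1, hC2⟩
        have h := hM (fromBlocks C 0 0 0) ⟨(hannih _).2 (by
          simp only [toBlocks_fromBlocks₁₁, toBlocks_fromBlocks₁₂, toBlocks_fromBlocks₂₁,
            toBlocks_fromBlocks₂₂]
          exact ⟨hC1, zero_mem_annih _, zero_mem_annih _, zero_mem_annih _⟩),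
          (rank_embed₁₁ C).trans hC2⟩
        simpa [trace_mul_blocks] using h
      · rintro C ⟨hC1, hC2⟩
        have h := hM (fromBlocks 0 0 C 0) ⟨(hannih _).2 (by
          simp only [toBlocks_fromBlocks₁₁, toBlocks_fromBlocks₁₂, toBlocks_fromBlocks₂₁,
            toBlocks_fromBlocks₂₂]
          exact ⟨zero_mem_annih _, hC1, zero_mem_annih _, zero_mem_annih _⟩),
          (rank_embed₂₁ C).trans hC2⟩
        simpa [trace_mul_blocks] using h
      · rintro C ⟨hC1, hC2⟩
        have h := hM (fromBlocks 0 C 0 0) ⟨(hannih _).2 (by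
          simp only [toBlocks_fromBlocks₁₁, toBlocks_fromBlocks₁₂, toBlocks_fromBlocks₂₁,
            toBlocks_fromBlocks₂₂]
          exact ⟨zero_mem_annih _, zero_mem_annih _, hC1, zero_mem_annih _⟩),
          (rank_embed₁₂ C).trans hC2⟩
        simpa [trace_mul_blocks] using h
      · rintro C ⟨hC1, hC2⟩
        have h := hM (fromBlocks 0 0 0 C) ⟨(hannih _).2 (by
          simp only [toBlocks_fromBlocks₁₁, toBlocks_fromBlocks₁₂, toBlocks_fromBlocks₂₁,
            toBlocks_fromBlocks₂₂]
          exact ⟨zero_mem_annih _, zero_mem_annih _, zero_mem_annih _, hC1⟩),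
          (rank_embed₂₂ C).trans hC2⟩
        simpa [trace_mul_blocks] using h
    · rintro ⟨h11, h12, h21, h22⟩ C ⟨hC1, hC2⟩
      obtain ⟨g11, g21, g12, g22⟩ := (hannih C).1 hC1
      have r11 : C.toBlocks₁₁.rank ≤ k := (rank_submatrix_le_gen C Sum.inl Sum.inl).trans hC2
      have r12 : C.toBlocks₁₂.rank ≤ k := (rank_submatrix_le_gen C Sum.inl Sum.inr).trans hC2
      have r21 : C.toBlocks₂₁.rank ≤ k := (rank_submatrix_le_gen C Sum.inr Sum.inl).trans hC2
      have r22 : C.toBlocks₂₂.rank ≤ k := (rank_submatrix_le_gen C Sum.inr Sum.inr).trans hC2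
      rw [trace_mul_blocks, h11 _ ⟨g11, r11⟩, h12 _ ⟨g21, r21⟩, h21 _ ⟨g12, r12⟩,
        h22 _ ⟨g22, r22⟩]
      ring
  refine ⟨hRef, ?_⟩
  -- dimensions
  have hspanS : Submodule.span ℂ S = blockSub S₁₁ S₁₂ S₂₁ S₂₂ := by
    rw [hS, ← blockSub_coe, Submodule.span_eq]
  have hsetRef : {M : Matrix (Fin m₁ ⊕ Fin m₂) (Fin m₁ ⊕ Fin m₂) ℂ |
      M.toBlocks₁₁ ∈ RefK k (S₁₁ : Set (Matrix (Fin m₁) (Fin m₁) ℂ)) ∧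
      M.toBlocks₁₂ ∈ RefK k (S₁₂ : Set (Matrix (Fin m₁) (Fin m₂) ℂ)) ∧
      M.toBlocks₂₁ ∈ RefK k (S₂₁ : Set (Matrix (Fin m₂) (Fin m₁) ℂ)) ∧
      M.toBlocks₂₂ ∈ RefK k (S₂₂ : Set (Matrix (Fin m₂) (Fin m₂) ℂ))} =
      (blockSub (annihSub {C : Matrix (Fin m₁) (Fin m₁) ℂ | C ∈ annih (S₁₁ : Set (Matrix (Fin m₁) (Fin m₁) ℂ)) ∧ C.rank ≤ k})
        (annihSub {C : Matrix (Fin m₂) (Fin m₁) ℂ | C ∈ annih (S₁₂ : Set (Matrix (Fin m₁) (Fin m₂) ℂ)) ∧ C.rank ≤ k})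
        (annihSub {C : Matrix (Fin m₁) (Fin m₂) ℂ | C ∈ annih (S₂₁ : Set (Matrix (Fin m₂) (Fin m₁) ℂ)) ∧ C.rank ≤ k})
        (annihSub {C : Matrix (Fin m₂) (Fin m₂) ℂ | C ∈ annih (S₂₂ : Set (Matrix (Fin m₂) (Fin m₂) ℂ)) ∧ C.rank ≤ k}) :
          Set (Matrix (Fin m₁ ⊕ Fin m₂) (Fin m₁ ⊕ Fin m₂) ℂ)) := by
    rw [blockSub_coe]
    rfl
  have hspanRef : Submodule.span ℂ (RefK k S) =
      blockSub (annihSub {C : Matrix (Fin m₁) (Fin m₁) ℂ | C ∈ annih (S₁₁ : Set (Matrix (Fin m₁) (Fin m₁) ℂ)) ∧ C.rank ≤ k})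
        (annihSub {C : Matrix (Fin m₂) (Fin m₁) ℂ | C ∈ annih (S₁₂ : Set (Matrix (Fin m₁) (Fin m₂) ℂ)) ∧ C.rank ≤ k})
        (annihSub {C : Matrix (Fin m₁) (Fin m₂) ℂ | C ∈ annih (S₂₁ : Set (Matrix (Fin m₂) (Fin m₁) ℂ)) ∧ C.rank ≤ k})
        (annihSub {C : Matrix (Fin m₂) (Fin m₂) ℂ | C ∈ annih (S₂₂ : Set (Matrix (Fin m₂) (Fin m₂) ℂ)) ∧ C.rank ≤ k}) := by
    rw [hRef, hsetRef, Submodule.span_eq]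
  have e11 : Submodule.span ℂ (RefK k (S₁₁ : Set (Matrix (Fin m₁) (Fin m₁) ℂ))) =
      annihSub {C : Matrix (Fin m₁) (Fin m₁) ℂ | C ∈ annih (S₁₁ : Set (Matrix (Fin m₁) (Fin m₁) ℂ)) ∧ C.rank ≤ k} := span_annih _
  have e12 : Submodule.span ℂ (RefK k (S₁₂ : Set (Matrix (Fin m₁) (Fin m₂) ℂ))) =
      annihSub {C : Matrix (Fin m₂) (Fin m₁) ℂ | C ∈ annih (S₁₂ : Set (Matrix (Fin m₁) (Fin m₂) ℂ)) ∧ C.rank ≤ k} := span_annih _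
  have e21 : Submodule.span ℂ (RefK k (S₂₁ : Set (Matrix (Fin m₂) (Fin m₁) ℂ))) =
      annihSub {C : Matrix (Fin m₁) (Fin m₂) ℂ | C ∈ annih (S₂₁ : Set (Matrix (Fin m₂) (Fin m₁) ℂ)) ∧ C.rank ≤ k} := span_annih _
  have e22 : Submodule.span ℂ (RefK k (S₂₂ : Set (Matrix (Fin m₂) (Fin m₂) ℂ))) =
      annihSub {C : Matrix (Fin m₂) (Fin m₂) ℂ | C ∈ annih (S₂₂ : Set (Matrix (Fin m₂) (Fin m₂) ℂ)) ∧ C.rank ≤ k} := span_annih _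
  have le11 : Module.finrank ℂ (Submodule.span ℂ (S₁₁ : Set (Matrix (Fin m₁) (Fin m₁) ℂ))) ≤
      Module.finrank ℂ (Submodule.span ℂ (RefK k (S₁₁ : Set (Matrix (Fin m₁) (Fin m₁) ℂ)))) :=
    Submodule.finrank_mono (Submodule.span_mono (subset_RefK k _))
  have le12 : Module.finrank ℂ (Submodule.span ℂ (S₁₂ : Set (Matrix (Fin m₁) (Fin m₂) ℂ))) ≤
      Module.finrank ℂ (Submodule.span ℂ (RefK k (S₁₂ : Set (Matrix (Fin m₁) (Fin m₂) ℂ)))) :=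
    Submodule.finrank_mono (Submodule.span_mono (subset_RefK k _))
  have le21 : Module.finrank ℂ (Submodule.span ℂ (S₂₁ : Set (Matrix (Fin m₂) (Fin m₁) ℂ))) ≤
      Module.finrank ℂ (Submodule.span ℂ (RefK k (S₂₁ : Set (Matrix (Fin m₂) (Fin m₁) ℂ)))) :=
    Submodule.finrank_mono (Submodule.span_mono (subset_RefK k _))
  have le22 : Module.finrank ℂ (Submodule.span ℂ (S₂₂ : Set (Matrix (Fin m₂) (Fin m₂) ℂ))) ≤
      Module.finrank ℂ (Submodule.span ℂ (RefK k (S₂₂ : Set (Matrix (Fin m₂) (Fin m₂) ℂ)))) :=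
    Submodule.finrank_mono (Submodule.span_mono (subset_RefK k _))
  rw [rdK, rdK, rdK, rdK, rdK, hspanS, hspanRef, finrank_blockSub, finrank_blockSub,
    ← e11, ← e12, ← e21, ← e22, Submodule.span_eq S₁₁, Submodule.span_eq S₁₂,
    Submodule.span_eq S₂₁, Submodule.span_eq S₂₂]
  rw [Submodule.span_eq S₁₁] at le11
  rw [Submodule.span_eq S₁₂] at le12
  rw [Submodule.span_eq S₂₁] at le21
  rw [Submodule.span_eq S₂₂] at le22
  omega
end

section
/- Let δ(T) = J_n(0)T − T J_n(0) on M_n(ℂ) with n ≥ 3. For every k with 1 ≤ k ≤ n − 1, the k-reflexivity defect of im δ equals n − k. In particular im δ is not (n−1)-reflexive. -/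
open Matrix

variable {n : ℕ}

lemma JB_apply (i j : Fin n) : JB n 0 i j = if (j:ℕ) = (i:ℕ)+1 then 1 else 0 := by
  simp only [JB, of_apply]
  split_ifs <;> rfl

lemma Jpow_apply (m : ℕ) (i j : Fin n) :
    (JB n 0 ^ m) i j = if (j:ℕ) = (i:ℕ)+m then 1 else 0 := by
  induction m generalizing j with
  | zero => simp [Matrix.one_apply, Fin.ext_iff, eq_comm]
  | succ m ih =>
    rw [pow_succ, Matrix.mul_apply]
    by_cases h : (i:ℕ) + m < n
    · rw [Finset.sum_eq_single (⟨(i:ℕ)+m, h⟩ : Fin n)]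
      · rw [ih, JB_apply]
        simp [Fin.val_mk, Nat.add_assoc]
      · intro b _ hb
        rw [ih]
        rw [if_neg (fun hh => hb (Fin.ext hh)), zero_mul]
      · simp
    · rw [Finset.sum_eq_zero, if_neg (by omega)]
      intro b _
      rw [ih, if_neg (by omega), zero_mul]

lemma trace_mul_eq (A B : Matrix (Fin n) (Fin n) ℂ) :
    (A * B).trace = ∑ i, ∑ j, A i j * B j i := by
  simp [Matrix.trace, Matrix.mul_apply, Matrix.diag]

/-- single-entry matrix -/
def Em (p q : Fin n) : Matrix (Fin n) (Fin n) ℂ :=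
  Matrix.of fun a b => if a = p ∧ b = q then 1 else 0

lemma trace_mul_Em (M : Matrix (Fin n) (Fin n) ℂ) (p q : Fin n) :
    (M * Em q p).trace = M p q := by
  rw [trace_mul_eq]
  rw [Finset.sum_eq_single p]
  · rw [Finset.sum_eq_single q]
    · simp [Em]
    · intro b _ hb; simp [Em, hb]
    · simp
  · intro a _ ha
    rw [Finset.sum_eq_zero]
    intro b _; simp [Em, ha]
  · simp

lemma trace_Em_mul (p q : Fin n) (B : Matrix (Fin n) (Fin n) ℂ) :
    (Em p q * B).trace = B q p := by
  rw [trace_mul_eq]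
  rw [Finset.sum_eq_single p]
  · rw [Finset.sum_eq_single q]
    · simp [Em]
    · intro b _ hb; simp [Em, hb]
    · simp
  · intro a _ ha
    rw [Finset.sum_eq_zero]
    intro b _; simp [Em, ha]
  · simp

lemma eq_zero_of_trace_mul (M : Matrix (Fin n) (Fin n) ℂ)
    (h : ∀ T, (M * T).trace = 0) : M = 0 := by
  ext p q
  have := h (Em q p)
  rw [trace_mul_Em] at this
  simpa using this

/-- the inner derivation as a linear map -/
noncomputable def delta (n : ℕ) : Matrix (Fin n) (Fin n) ℂ →ₗ[ℂ] Matrix (Fin n) (Fin n) ℂ where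
  toFun T := JB n 0 * T - T * JB n 0
  map_add' := by intro x y; simp [mul_add, add_mul]; abel
  map_smul' := by intro c x; simp [Matrix.mul_smul, Matrix.smul_mul, smul_sub]

/-- upper triangular Toeplitz matrix from its first row -/
noncomputable def toep (n : ℕ) : (Fin n → ℂ) →ₗ[ℂ] Matrix (Fin n) (Fin n) ℂ where
  toFun c := Matrix.of fun i j =>
    if h : (i:ℕ) ≤ (j:ℕ) then c ⟨(j:ℕ)-(i:ℕ), lt_of_le_of_lt (Nat.sub_le _ _) j.isLt⟩ else 0
  map_add' := by
    intro x y; ext i j; simp only [of_apply, Matrix.add_apply]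
    split <;> simp
  map_smul' := by
    intro c x; ext i j; simp only [of_apply, Matrix.smul_apply, RingHom.id_apply]
    split <;> simp

lemma toep_apply (c : Fin n → ℂ) (i j : Fin n) :
    toep n c i j = if h : (i:ℕ) ≤ (j:ℕ) then
      c ⟨(j:ℕ)-(i:ℕ), lt_of_le_of_lt (Nat.sub_le _ _) j.isLt⟩ else 0 := rfl

lemma mul_JB_apply (C : Matrix (Fin n) (Fin n) ℂ) (i j : Fin n) :
    (C * JB n 0) i j = if h : 0 < (j:ℕ) then C i ⟨(j:ℕ)-1, by omega⟩ else 0 := by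
  rw [Matrix.mul_apply]
  by_cases h : 0 < (j:ℕ)
  · rw [dif_pos h, Finset.sum_eq_single (⟨(j:ℕ)-1, by omega⟩ : Fin n)]
    · rw [JB_apply, if_pos (by simp; omega), mul_one]
    · intro b _ hb
      rw [JB_apply, if_neg (fun hh => hb (Fin.ext (by simp; omega))), mul_zero]
    · simp
  · rw [dif_neg h, Finset.sum_eq_zero]
    intro b _
    rw [JB_apply, if_neg (by omega), mul_zero]

lemma JB_mul_apply (C : Matrix (Fin n) (Fin n) ℂ) (i j : Fin n) :
    (JB n 0 * C) i j = if h : (i:ℕ)+1 < n then C ⟨(i:ℕ)+1, h⟩ j else 0 := by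
  rw [Matrix.mul_apply]
  by_cases h : (i:ℕ)+1 < n
  · rw [dif_pos h, Finset.sum_eq_single (⟨(i:ℕ)+1, h⟩ : Fin n)]
    · rw [JB_apply, if_pos (by simp), one_mul]
    · intro b _ hb
      rw [JB_apply, if_neg (fun hh => hb (Fin.ext (by simpa using hh))), zero_mul]
    · simp
  · rw [dif_neg h, Finset.sum_eq_zero]
    intro b _
    rw [JB_apply, if_neg (by omega), zero_mul]

lemma toep_comm (c : Fin n → ℂ) : JB n 0 * toep n c = toep n c * JB n 0 := by
  ext i j
  rw [mul_JB_apply, JB_mul_apply]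
  by_cases h1 : (i:ℕ)+1 < n <;> by_cases h2 : 0 < (j:ℕ)
  · rw [dif_pos h1, dif_pos h2, toep_apply, toep_apply]
    by_cases h3 : (i:ℕ)+1 ≤ (j:ℕ)
    · rw [dif_pos h3, dif_pos (show (i:ℕ) ≤ (j:ℕ)-1 by omega)]
      congr 1
      exact Fin.ext (by simp only [Fin.val_mk]; omega)
    · rw [dif_neg h3, dif_neg (by simp only [Fin.val_mk]; omega)]
  · rw [dif_pos h1, dif_neg h2, toep_apply, dif_neg (by simp only [Fin.val_mk]; omega)]
  · rw [dif_neg h1, dif_pos h2, toep_apply, dif_neg (by simp only [Fin.val_mk]; omega)]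
  · rw [dif_neg h1, dif_neg h2]

lemma eq_toep_of_comm (C : Matrix (Fin n) (Fin n) ℂ)
    (h : JB n 0 * C = C * JB n 0) (hn : 0 < n) : C = toep n (C ⟨0, hn⟩) := by
  have key : ∀ (i : ℕ) (hi : i < n) (j : Fin n), C ⟨i, hi⟩ j =
      if hij : i ≤ (j:ℕ) then C ⟨0, hn⟩ ⟨(j:ℕ)-i, lt_of_le_of_lt (Nat.sub_le _ _) j.isLt⟩
      else 0 := by
    intro i
    induction i with
    | zero =>
      intro hi j
      rw [dif_pos (Nat.zero_le _)]
      congr 1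
    | succ i ih =>
      intro hi j
      have hi' : i < n := by omega
      have hent := congrFun (congrFun h ⟨i, hi'⟩) j
      rw [mul_JB_apply, JB_mul_apply] at hent
      rw [dif_pos (by simpa using hi)] at hent
      rw [hent]
      by_cases h2 : 0 < (j:ℕ)
      · rw [dif_pos h2, ih hi']
        by_cases h3 : i + 1 ≤ (j:ℕ)
        · rw [dif_pos (show i ≤ ((⟨(j:ℕ)-1, by omega⟩ : Fin n) : ℕ) by simp only [Fin.val_mk]; omega), dif_pos h3]
          congr 1
          exact Fin.ext (by simp only [Fin.val_mk]; omega)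
        · rw [dif_neg (show ¬ i ≤ ((⟨(j:ℕ)-1, by omega⟩ : Fin n) : ℕ) by simp only [Fin.val_mk]; omega), dif_neg h3]
      · rw [dif_neg h2, dif_neg (by omega)]
  ext i j
  rw [toep_apply]
  have := key i.val i.isLt j
  simpa using this

lemma toep_injective (hn : 0 < n) : Function.Injective (toep n) := by
  intro c c' h
  funext m
  have h0 := congrFun (congrFun h (⟨0, hn⟩ : Fin n)) m
  rw [toep_apply, toep_apply, dif_pos (Nat.zero_le _), dif_pos (Nat.zero_le _)] at h0
  have hm : (⟨(m:ℕ)-0, lt_of_le_of_lt (Nat.sub_le _ _) m.isLt⟩ : Fin n) = m :=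
    Fin.ext (by simp)
  rwa [hm] at h0

lemma toep_eq_sum_pow (c : Fin n → ℂ) :
    toep n c = ∑ m : Fin n, c m • JB n 0 ^ (m:ℕ) := by
  ext i j
  rw [toep_apply]
  rw [Matrix.sum_apply]
  simp only [Matrix.smul_apply, Jpow_apply, smul_eq_mul]
  by_cases h : (i:ℕ) ≤ (j:ℕ)
  · rw [dif_pos h, Finset.sum_eq_single (⟨(j:ℕ)-(i:ℕ), lt_of_le_of_lt (Nat.sub_le _ _) j.isLt⟩ : Fin n)]
    · rw [if_pos (by simp only [Fin.val_mk]; omega), mul_one]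
    · intro b _ hb
      rw [if_neg (fun hh => hb (Fin.ext (by simp only [Fin.val_mk]; omega))), mul_zero]
    · simp
  · rw [dif_neg h, Finset.sum_eq_zero]
    intro b _
    rw [if_neg (by omega), mul_zero]

lemma rank_Jpow_le (m : ℕ) : (JB n 0 ^ m).rank ≤ n - m := by
  have hfac : JB n 0 ^ m =
      (Matrix.of fun (i : Fin n) (s : Fin (n-m)) => if (s:ℕ) = (i:ℕ) then (1:ℂ) else 0) *
      (Matrix.of fun (s : Fin (n-m)) (j : Fin n) => if (j:ℕ) = (s:ℕ)+m then (1:ℂ) else 0) := by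
    ext i j
    rw [Matrix.mul_apply, Jpow_apply]
    by_cases h : (i:ℕ) < n - m
    · rw [Finset.sum_eq_single (⟨(i:ℕ), h⟩ : Fin (n-m))]
      · simp
      · intro b _ hb
        simp only [of_apply]
        rw [if_neg (fun hh => hb (Fin.ext hh)), zero_mul]
      · simp
    · rw [if_neg (by omega), Finset.sum_eq_zero]
      intro b _
      simp only [of_apply]
      rw [if_neg (by omega), zero_mul]
  have h1 : (JB n 0 ^ m).rank ≤ (Matrix.of fun (s : Fin (n-m)) (j : Fin n) =>
      if (j:ℕ) = (s:ℕ)+m then (1:ℂ) else 0).rank := by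
    rw [hfac]; exact Matrix.rank_mul_le_right _ _
  refine h1.trans ((Matrix.rank_le_card_height _).trans ?_)
  rw [Fintype.card_fin]

lemma toep_coeff_zero (k : ℕ) (hk : k ≤ n-1) (hn : 3 ≤ n) (c : Fin n → ℂ)
    (hr : (toep n c).rank ≤ k) : ∀ m : Fin n, (m:ℕ) < n - k → c m = 0 := by
  suffices H : ∀ p : ℕ, ∀ m : Fin n, (m:ℕ) < n - k → (m:ℕ) < p → c m = 0 by
    intro m hm; exact H n m hm m.isLt
  intro p
  induction p with
  | zero => intro m _ hm; omega
  | succ p ih =>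
    intro m hmk hmp
    rcases Nat.lt_or_ge (m:ℕ) p with h | h
    · exact ih m hmk h
    have hp : (m:ℕ) = p := by omega
    by_contra hc
    have hpk : p < n - k := by omega
    have hpn : p < n := by have := m.isLt; omega
    set B : Matrix (Fin (n-p)) (Fin (n-p)) ℂ :=
      Matrix.of (fun s t => toep n c ⟨(s:ℕ), by omega⟩ ⟨(t:ℕ)+p, by omega⟩) with hB
    have hrankB : B.rank ≤ k := by
      have hfac : B = (Matrix.of fun (s : Fin (n-p)) (i : Fin n) =>
            if (i:ℕ) = (s:ℕ) then (1:ℂ) else 0) *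
          ((toep n c) * (Matrix.of fun (j : Fin n) (t : Fin (n-p)) =>
            if (j:ℕ) = (t:ℕ)+p then (1:ℂ) else 0)) := by
        ext s t
        rw [Matrix.mul_apply]
        rw [Finset.sum_eq_single (⟨(s:ℕ), by omega⟩ : Fin n)]
        · rw [Matrix.mul_apply]
          rw [Finset.sum_eq_single (⟨(t:ℕ)+p, by omega⟩ : Fin n)]
          · simp [hB]
          · intro b _ hb
            simp only [of_apply]
            rw [if_neg (fun hh => hb (Fin.ext hh)), mul_zero]
          · simp
        · intro b _ hb
          simp only [of_apply]
          rw [if_neg (fun hh => hb (Fin.ext hh)), zero_mul]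
        · simp
      refine le_trans ?_ (le_trans (Matrix.rank_mul_le_left (toep n c)
        (Matrix.of fun (j : Fin n) (t : Fin (n-p)) =>
          if (j:ℕ) = (t:ℕ)+p then (1:ℂ) else 0)) hr)
      rw [hfac]
      exact Matrix.rank_mul_le_right _ _
    have htri : B.BlockTriangular id := by
      intro s t hts
      simp only [id] at hts
      simp only [hB, of_apply, toep_apply, Fin.val_mk]
      by_cases hst : (s:ℕ) ≤ (t:ℕ)+p
      · rw [dif_pos hst]
        refine ih _ ?_ ?_ <;> · simp only [Fin.val_mk]; omega
      · rw [dif_neg hst]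
    have hdiag : ∀ s : Fin (n-p), B s s = c m := by
      intro s
      simp only [hB, of_apply, toep_apply, Fin.val_mk]
      rw [dif_pos (by omega : (s:ℕ) ≤ (s:ℕ)+p)]
      congr 1
      exact Fin.ext (by simp only [Fin.val_mk]; omega)
    have hdet : B.det ≠ 0 := by
      rw [Matrix.det_of_upperTriangular htri]
      rw [Finset.prod_congr rfl (fun s _ => hdiag s), Finset.prod_const]
      exact pow_ne_zero _ hc
    have hunit : IsUnit B := by
      rw [Matrix.isUnit_iff_isUnit_det]
      exact hdet.isUnit
    have hcard := Matrix.rank_of_isUnit B hunit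
    rw [Fintype.card_fin] at hcard
    omega

lemma trace_comm_expand (C T : Matrix (Fin n) (Fin n) ℂ) :
    (C * (JB n 0 * T - T * JB n 0)).trace = ((C * JB n 0 - JB n 0 * C) * T).trace := by
  rw [mul_sub, sub_mul, Matrix.trace_sub, Matrix.trace_sub, ← Matrix.mul_assoc]
  congr 1
  rw [← Matrix.mul_assoc, Matrix.trace_mul_cycle]

lemma mem_annih_iff (C : Matrix (Fin n) (Fin n) ℂ) :
    (C ∈ annih (Set.range fun T : Matrix (Fin n) (Fin n) ℂ => JB n 0 * T - T * JB n 0)) ↔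
    JB n 0 * C = C * JB n 0 := by
  constructor
  · intro hC
    have h0 : ∀ T, ((C * JB n 0 - JB n 0 * C) * T).trace = 0 := by
      intro T
      rw [← trace_comm_expand]
      exact hC _ ⟨T, rfl⟩
    have := eq_zero_of_trace_mul _ h0
    rw [sub_eq_zero] at this
    exact this.symm
  · intro hcomm A hA
    obtain ⟨T, rfl⟩ := hA
    rw [trace_comm_expand, sub_eq_zero_of_eq hcomm.symm, Matrix.zero_mul, Matrix.trace_zero]

lemma Jpow_mem_annih (m : ℕ) :
    (JB n 0 ^ m) ∈ annih (Set.range fun T : Matrix (Fin n) (Fin n) ℂ =>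
      JB n 0 * T - T * JB n 0) := by
  rw [mem_annih_iff]
  rw [← pow_succ', pow_succ]

/-- the linear functionals cutting out `RefK k S` -/
noncomputable def Lmap (n k : ℕ) : Matrix (Fin n) (Fin n) ℂ →ₗ[ℂ] (Fin k → ℂ) where
  toFun A := fun t => (A * JB n 0 ^ (n-1-(t:ℕ))).trace
  map_add' := by intro x y; funext t; simp [add_mul]
  map_smul' := by intro c x; funext t; simp [Matrix.smul_mul]

lemma refk_eq_ker (k : ℕ) (h1 : 1 ≤ k) (hk : k ≤ n-1) (hn : 3 ≤ n) :
    RefK k (Set.range fun T : Matrix (Fin n) (Fin n) ℂ => JB n 0 * T - T * JB n 0) =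
    ↑(LinearMap.ker (Lmap n k)) := by
  ext A
  simp only [SetLike.mem_coe, LinearMap.mem_ker]
  constructor
  · intro hA
    funext t
    have hmem : (JB n 0 ^ (n-1-(t:ℕ))) ∈ {C | C ∈ annih (Set.range fun T :
        Matrix (Fin n) (Fin n) ℂ => JB n 0 * T - T * JB n 0) ∧ C.rank ≤ k} := by
      refine ⟨Jpow_mem_annih _, ?_⟩
      refine (rank_Jpow_le _).trans ?_
      have := t.isLt
      omega
    exact hA _ hmem
  · intro hA C hC
    obtain ⟨hC1, hC2⟩ := hC
    rw [mem_annih_iff] at hC1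
    have hCtoep := eq_toep_of_comm C hC1 (by omega)
    set c := C ⟨0, by omega⟩ with hc
    have hvanish : ∀ m : Fin n, (m:ℕ) < n - k → c m = 0 :=
      toep_coeff_zero k hk hn c (by rw [← hCtoep]; exact hC2)
    rw [hCtoep]
    rw [toep_eq_sum_pow]
    rw [Matrix.mul_sum, Matrix.trace_sum]
    refine Finset.sum_eq_zero fun m _ => ?_
    rcases Nat.lt_or_ge (m:ℕ) (n-k) with h | h
    · rw [hvanish m h]
      simp
    · have ht : n-1-(n-1-(m:ℕ)) = (m:ℕ) := by have := m.isLt; omega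
      have htk : n-1-(m:ℕ) < k := by have := m.isLt; omega
      have := congrFun hA ⟨n-1-(m:ℕ), htk⟩
      simp only [Lmap, LinearMap.coe_mk, AddHom.coe_mk, Fin.val_mk, ht, Pi.zero_apply] at this
      rw [Matrix.mul_smul, Matrix.trace_smul, this, smul_zero]

lemma Lmap_surjective (k : ℕ) (hk : k ≤ n-1) (hn : 3 ≤ n) :
    Function.Surjective (Lmap n k) := by
  intro v
  refine ⟨∑ t : Fin k, v t • Em ⟨n-1-(t:ℕ), by omega⟩ ⟨0, by omega⟩, ?_⟩
  funext t'
  simp only [Lmap, LinearMap.coe_mk, AddHom.coe_mk]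
  rw [Finset.sum_mul, Matrix.trace_sum]
  rw [Finset.sum_eq_single t']
  · rw [Matrix.smul_mul, Matrix.trace_smul, trace_Em_mul, Jpow_apply]
    rw [if_pos (by simp)]
    simp
  · intro t _ ht
    rw [Matrix.smul_mul, Matrix.trace_smul, trace_Em_mul, Jpow_apply]
    rw [if_neg (by
      simp only [Fin.val_mk]
      intro hh
      apply ht
      have h1 := t.isLt
      have h2 := t'.isLt
      exact Fin.ext (by omega))]
    simp
  · simp

lemma finrank_ker_Lmap (k : ℕ) (hk : k ≤ n-1) (hn : 3 ≤ n) :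
    Module.finrank ℂ (LinearMap.ker (Lmap n k)) = n*n - k := by
  have hrn := LinearMap.finrank_range_add_finrank_ker (Lmap n k)
  have hr : LinearMap.range (Lmap n k) = ⊤ :=
    LinearMap.range_eq_top.mpr (Lmap_surjective k hk hn)
  rw [hr, finrank_top] at hrn
  have h1 : Module.finrank ℂ (Fin k → ℂ) = k := by
    rw [Module.finrank_pi]
    exact Fintype.card_fin _
  have h2 : Module.finrank ℂ (Matrix (Fin n) (Fin n) ℂ) = n*n := by
    rw [Module.finrank_matrix]
    simp [Fintype.card_fin]
  rw [h1, h2] at hrn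
  omega

lemma ker_delta_eq : LinearMap.ker (delta n) = LinearMap.range (toep n) := by
  ext C
  simp only [LinearMap.mem_ker, LinearMap.mem_range]
  constructor
  · intro hC
    have hcomm : JB n 0 * C = C * JB n 0 := by
      have : JB n 0 * C - C * JB n 0 = 0 := hC
      rw [sub_eq_zero] at this
      exact this
    rcases Nat.eq_zero_or_pos n with h0 | h0
    · exact ⟨0, by ext i j; exact absurd i.isLt (by omega)⟩
    exact ⟨C ⟨0, h0⟩, (eq_toep_of_comm C hcomm h0).symm⟩
  · rintro ⟨c, rfl⟩
    show JB n 0 * toep n c - toep n c * JB n 0 = 0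
    rw [toep_comm, sub_self]

lemma finrank_range_delta (hn : 3 ≤ n) :
    Module.finrank ℂ (LinearMap.range (delta n)) = n*n - n := by
  have hrn := LinearMap.finrank_range_add_finrank_ker (delta n)
  rw [ker_delta_eq] at hrn
  have h1 : Module.finrank ℂ (LinearMap.range (toep n)) = n := by
    rw [LinearMap.finrank_range_of_inj (toep_injective (by omega))]
    rw [Module.finrank_pi]
    exact Fintype.card_fin _
  have h2 : Module.finrank ℂ (Matrix (Fin n) (Fin n) ℂ) = n*n := by
    rw [Module.finrank_matrix]
    simp [Fintype.card_fin]
  rw [h1, h2] at hrn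
  have hnn : n ≤ n*n := Nat.le_mul_of_pos_left n (by omega)
  omega

lemma span_S_eq (hn : 3 ≤ n) :
    Submodule.span ℂ (Set.range fun T : Matrix (Fin n) (Fin n) ℂ =>
      JB n 0 * T - T * JB n 0) = LinearMap.range (delta n) := by
  have hfun : (fun T : Matrix (Fin n) (Fin n) ℂ => JB n 0 * T - T * JB n 0) =
      ⇑(delta n) := rfl
  rw [hfun, ← LinearMap.coe_range, Submodule.span_eq]


/-- for `n ≥ 3` and `δ(T) = J_n(0)T − TJ_n(0)`, one has
`rd_k(im δ) = n − k` for `1 ≤ k ≤ n − 1`; in particular `im δ` is not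
`(n−1)`-reflexive. -/
theorem rdk_inner_derivation (n : ℕ) (hn : 3 ≤ n) :
    (∀ k : ℕ, 1 ≤ k → k ≤ n - 1 →
        rdK k (Set.range fun T : Matrix (Fin n) (Fin n) ℂ =>
          JB n 0 * T - T * JB n 0) = n - k) ∧
      RefK (n - 1) (Set.range fun T : Matrix (Fin n) (Fin n) ℂ =>
          JB n 0 * T - T * JB n 0) ≠
        Set.range fun T : Matrix (Fin n) (Fin n) ℂ => JB n 0 * T - T * JB n 0 := by
  have hspanS : Module.finrank ℂ (Submodule.span ℂ (Set.range fun T :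
      Matrix (Fin n) (Fin n) ℂ => JB n 0 * T - T * JB n 0)) = n*n - n := by
    rw [span_S_eq hn, finrank_range_delta hn]
  have hspanR : ∀ k : ℕ, 1 ≤ k → k ≤ n - 1 →
      Module.finrank ℂ (Submodule.span ℂ (RefK k (Set.range fun T :
        Matrix (Fin n) (Fin n) ℂ => JB n 0 * T - T * JB n 0))) = n*n - k := by
    intro k h1 hk
    rw [refk_eq_ker k h1 hk hn, Submodule.span_eq, finrank_ker_Lmap k hk hn]
  constructor
  · intro k h1 hk
    rw [rdK, hspanS, hspanR k h1 hk]
    have hnn : n ≤ n*n := Nat.le_mul_of_pos_left n (by omega)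
    omega
  · intro heq
    have h1 : Module.finrank ℂ (Submodule.span ℂ (RefK (n-1) (Set.range fun T :
        Matrix (Fin n) (Fin n) ℂ => JB n 0 * T - T * JB n 0))) = n*n - (n-1) :=
      hspanR (n-1) (by omega) le_rfl
    rw [heq, hspanS] at h1
    have hnn : n ≤ n*n := Nat.le_mul_of_pos_left n (by omega)
    omega
end
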